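/- Let G be a reflexive digraph and a ∈ G, and consider the digraph F(G,a) of loops at a (paths from a to a). Call an edge (p,q) of F(G,a) non-refinable if there is no nonempty proper subset A of the set Neq(p,q) = {t : p(t) ≠ q(t)} such that changing q to agree with p on A yields a vertex of F(G,a). Then an edge (p,q) of F(G,a) is non-refinable if and only if |Neq(p,q)| ≤ 1. -/
import Mathlib


open Classical in
/-- the arc relation of the one-way infinite fence `F` -/
def fenceArc (s t : ℕ) : Prop := s = t ∨ (Even s ∧ (t = s + 1 ∨ s = t + 1))

variable {V : Type*}

/-- a path in the reflexive digraph `(V, arc)` from `a` to `a`: a homomorphism from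
the fence starting at `a` and eventually constant equal to `a` -/
def IsLoop (arc : V → V → Prop) (a : V) (p : ℕ → V) : Prop :=
  p 0 = a ∧ (∃ N, ∀ t, N ≤ t → p t = a) ∧
  ∀ s t, fenceArc s t → arc (p s) (p t)

/-- an arc of the digraph `F(G,a)` of loops at `a` -/
def loopArc (arc : V → V → Prop) (p q : ℕ → V) : Prop :=
  ∀ s t, fenceArc s t → arc (p s) (q t)

/-- the set of places where `p` and `q` differ -/
def Neq (p q : ℕ → V) : Set ℕ := {t | p t ≠ q t}

open Classical in
/-- an edge `(p,q)` of `F(G,a)` is non-refinable if no nonempty proper subset `A` of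
`Neq(p,q)` is such that changing `q` to agree with `p` on `A` yields a vertex of `F(G,a)` -/
def NonRefinable (arc : V → V → Prop) (a : V) (p q : ℕ → V) : Prop :=
  ¬ ∃ A : Set ℕ, A ⊆ Neq p q ∧ A.Nonempty ∧ A ≠ Neq p q ∧
      IsLoop arc a (fun t => if t ∈ A then p t else q t)

/-- In a reflexive digraph, an edge `(p,q)` of `F(G,a)` is non-refinable if and only
if `p` and `q` differ in at most one place. -/
theorem stmt_17 (arc : V → V → Prop) (hrefl : ∀ v, arc v v) (a : V)
    (p q : ℕ → V) (hp : IsLoop arc a p) (hq : IsLoop arc a q)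
    (hpq : loopArc arc p q) :
    NonRefinable arc a p q ↔ (Neq p q).Subsingleton := by
  obtain ⟨hp0, ⟨Np, hNp⟩, hparc⟩ := hp
  obtain ⟨hq0, ⟨Nq, hNq⟩, hqarc⟩ := hq
  constructor
  · intro hnr
    by_contra hns
    rw [Set.not_subsingleton_iff] at hns
    obtain ⟨x, hx, y, hy, hxy⟩ := hns
    apply hnr
    by_cases hE : ∃ t₀ ∈ Neq p q, Even t₀
    · -- there is an even disagreement point t₀; take A = {t₀}
      obtain ⟨t₀, ht₀, het⟩ := hE
      refine ⟨{t₀}, ?_, ⟨t₀, rfl⟩, ?_, ?_, ⟨max Np Nq, ?_⟩, ?_⟩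
      · intro z hz
        rw [Set.mem_singleton_iff] at hz; subst hz; exact ht₀
      · intro h
        have hx' : x = t₀ := by rw [← h] at hx; exact hx
        have hy' : y = t₀ := by rw [← h] at hy; exact hy
        exact hxy (hx'.trans hy'.symm)
      · beta_reduce
        split_ifs with h0
        · exact hp0
        · exact hq0
      · intro t ht
        beta_reduce
        split_ifs with h
        · exact hNp t (le_trans (le_max_left _ _) ht)
        · exact hNq t (le_trans (le_max_right _ _) ht)
      · intro s t hst
        beta_reduce
        split_ifs with hs ht ht
        · rw [Set.mem_singleton_iff] at hs ht
          rw [hs, ht]; exact hrefl _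
        · exact hpq s t hst
        · -- arc into even t₀ from s ≠ t₀: impossible in the fence
          exfalso
          rw [Set.mem_singleton_iff] at ht
          subst ht
          rcases hst with h | ⟨hev, h | h⟩
          · exact hs (by rw [Set.mem_singleton_iff]; exact h)
          · obtain ⟨k, hk⟩ := het; obtain ⟨m, hm⟩ := hev; omega
          · obtain ⟨k, hk⟩ := het; obtain ⟨m, hm⟩ := hev; omega
        · exact hqarc s t hst
    · -- all disagreement points are odd; take A = Neq p q \ {x}
      push_neg at hE
      refine ⟨Neq p q \ {x}, Set.diff_subset, ⟨y, hy, Ne.symm hxy⟩, ?_, ?_,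
        ⟨max Np Nq, ?_⟩, ?_⟩
      · intro h
        have : x ∈ Neq p q \ {x} := by rw [h]; exact hx
        exact this.2 rfl
      · beta_reduce
        split_ifs with h0
        · exact hp0
        · exact hq0
      · intro t ht
        beta_reduce
        split_ifs with h
        · exact hNp t (le_trans (le_max_left _ _) ht)
        · exact hNq t (le_trans (le_max_right _ _) ht)
      · intro s t hst
        beta_reduce
        split_ifs with hs ht ht
        · exact hparc s t hst
        · exact hpq s t hst
        · by_cases hsn : s ∈ Neq p q
          · exfalso
            have hsx : s = x := by
              by_contra h'
              exact hs ⟨hsn, h'⟩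
            rcases hst with h | ⟨hev, _⟩
            · exact ht.2 (h ▸ hsx)
            · exact hE s hsn hev
          · have hps : p s = q s := not_not.mp hsn
            rw [← hps]; exact hparc s t hst
        · exact hqarc s t hst
  · intro hsub
    rintro ⟨A, hAsub, ⟨z, hz⟩, hAne, -⟩
    apply hAne
    refine Set.Subset.antisymm hAsub ?_
    intro w hw
    have : w = z := hsub hw (hAsub hz)
    rwa [this]
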